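/- Well-definedness of the linesearch in algorithm PANOC: let 0 < γ < 1/L and 0 < σ < γ(1 − γL)/2. For every u ∈ E, every ū ∈ T_γ(u) with r := (u − ū)/γ ≠ 0, and every direction d ∈ E, there exists i ∈ ℕ such that τ = (1/2)^i satisfies φ_γ(u − (1 − τ)γ r + τ d) ≤ φ_γ(u) − σ‖r‖²; i.e., the backtracking linesearch terminates after finitely many halvings. -/

import Mathlib

open scoped RealInnerProductSpace
open Filter Topology Asymptotics

/-- Moreau envelope `g^γ(v) = inf_w { g(w) + (1/(2γ))‖w − v‖² }` of an
extended-real-valued function `g`. -/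
noncomputable def moreauEnv {E : Type*} [NormedAddCommGroup E] [InnerProductSpace ℝ E]
    (g : E → EReal) (γ : ℝ) (v : E) : EReal :=
  ⨅ w : E, g w + (((1 / (2 * γ)) * ‖w - v‖ ^ 2 : ℝ) : EReal)

/-- The (set-valued) proximal mapping
`prox_{γg}(v) = argmin_w { g(w) + (1/(2γ))‖w − v‖² }`. -/
def proxSet {E : Type*} [NormedAddCommGroup E] [InnerProductSpace ℝ E]
    (g : E → EReal) (γ : ℝ) (v : E) : Set E :=
  {w | ∀ w' : E, g w + (((1 / (2 * γ)) * ‖w - v‖ ^ 2 : ℝ) : EReal)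
      ≤ g w' + (((1 / (2 * γ)) * ‖w' - v‖ ^ 2 : ℝ) : EReal)}

/-- The forward–backward envelope
`φ_γ(u) = ℓ(u) − (γ/2)‖∇ℓ(u)‖² + g^γ(u − γ∇ℓ(u))`, where `l'` plays the role
of the gradient `∇ℓ`. -/
noncomputable def fbe {E : Type*} [NormedAddCommGroup E] [InnerProductSpace ℝ E]
    (l : E → ℝ) (l' : E → E) (g : E → EReal) (γ : ℝ) (u : E) : EReal :=
  ((l u - (γ / 2) * ‖l' u‖ ^ 2 : ℝ) : EReal) + moreauEnv g γ (u - γ • l' u)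

/-! At a forward–backward point `ū` of `u` the descent lemma gives the sufficient decrease
`φ(ū) ≤ φ_γ(u) - γ(1 - γL)/2 ‖r‖²`, which stays strict with `σ` in place of `γ(1 - γL)/2`
because `r ≠ 0`. Choosing `w = ū` in the infimum defining the Moreau envelope bounds `φ_γ`
above by a continuous function whose value at `ū` is `φ(ū)`, and the linesearch points tend
to `ū` as `τ → 0`. -/

section
variable {E : Type*} [NormedAddCommGroup E] [InnerProductSpace ℝ E]

theorem le_add_inner_add_of_lipschitz_gradient [CompleteSpace E] {l : E → ℝ} {l' : E → E}
    {L : ℝ} (hgrad : ∀ x, HasGradientAt l (l' x) x)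
    (hlip : ∀ x y, ‖l' x - l' y‖ ≤ L * ‖x - y‖) (x y : E) :
    l y ≤ l x + ⟪l' x, y - x⟫ + L / 2 * ‖y - x‖ ^ 2 := by
  set v := y - x
  let h : ℝ → ℝ := fun t => l (x + t • v) - t * ⟪l' x, v⟫ - L / 2 * t ^ 2 * ‖v‖ ^ 2
  have hderiv : ∀ t, HasDerivAt h (⟪l' (x + t • v) - l' x, v⟫ - L * t * ‖v‖ ^ 2) t := by
    intro t
    have hline : HasDerivAt (fun t : ℝ => l (x + t • v)) ⟪l' (x + t • v), v⟫ t := by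
      simpa [Function.comp_def] using
        (hgrad _).hasFDerivAt.comp_hasDerivAt t (((hasDerivAt_id t).smul_const v).const_add x)
    refine ((hline.sub ((hasDerivAt_id' t).mul_const ⟪l' x, v⟫)).sub
      (((hasDerivAt_pow 2 t).const_mul (L / 2)).mul_const (‖v‖ ^ 2))).congr_deriv ?_
    rw [inner_sub_left]
    ring
  have hslope : ∀ t, 0 ≤ t → ⟪l' (x + t • v) - l' x, v⟫ ≤ L * t * ‖v‖ ^ 2 := fun t ht =>
    calc ⟪l' (x + t • v) - l' x, v⟫ ≤ ‖l' (x + t • v) - l' x‖ * ‖v‖ := real_inner_le_norm _ _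
      _ ≤ L * ‖t • v‖ * ‖v‖ := by gcongr; simpa using hlip (x + t • v) x
      _ = L * t * ‖v‖ ^ 2 := by rw [norm_smul, Real.norm_of_nonneg ht]; ring
  have hanti : AntitoneOn h (Set.Icc 0 1) :=
    antitoneOn_of_hasDerivWithinAt_nonpos (convex_Icc 0 1)
      (fun t _ => (hderiv t).continuousAt.continuousWithinAt)
      (fun t _ => (hderiv t).hasDerivWithinAt)
      (fun t ht => by
        rw [interior_Icc] at ht
        linarith [hslope t ht.1.le])
  have h10 : h 1 ≤ h 0 := hanti (by simp) (by simp) zero_le_one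
  simp only [h, v, one_smul, add_sub_cancel, zero_smul, add_zero] at h10
  linarith

theorem moreauEnv_eq_of_mem_proxSet {g : E → EReal} {γ : ℝ} {v w : E}
    (hw : w ∈ proxSet g γ v) :
    moreauEnv g γ v = g w + ((1 / (2 * γ) * ‖w - v‖ ^ 2 : ℝ) : EReal) :=
  le_antisymm (iInf_le _ w) (le_iInf hw)

theorem ne_top_of_mem_proxSet {g : E → EReal} {γ : ℝ} {v w : E} (hproper : ∃ x, g x ≠ ⊤)
    (hw : w ∈ proxSet g γ v) : g w ≠ ⊤ := by
  obtain ⟨x, hx⟩ := hproper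
  intro htop
  have := hw x
  rw [htop, EReal.top_add_coe, top_le_iff] at this
  exact EReal.add_lt_top hx (EReal.coe_ne_top _) |>.ne this

theorem one_div_two_mul_norm_sub_sub_smul_sq {γ : ℝ} (hγ : γ ≠ 0) (a v w : E) :
    1 / (2 * γ) * ‖w - (v - γ • a)‖ ^ 2
      = γ / 2 * ‖a‖ ^ 2 + ⟪a, w - v⟫ + 1 / (2 * γ) * ‖w - v‖ ^ 2 := by
  rw [show w - (v - γ • a) = (w - v) + γ • a by abel, norm_add_sq_real, inner_smul_right,
    norm_smul, Real.norm_eq_abs, mul_pow, sq_abs, real_inner_comm]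
  field_simp
  ring

variable {l : E → ℝ} {l' : E → E} {g : E → EReal} {γ b : ℝ}

theorem fbe_eq_of_mem_proxSet (hγ : γ ≠ 0) {u w : E} (hw : w ∈ proxSet g γ (u - γ • l' u))
    (hb : g w = b) :
    fbe l l' g γ u = ((l u + b + ⟪l' u, w - u⟫ + 1 / (2 * γ) * ‖w - u‖ ^ 2 : ℝ) : EReal) := by
  rw [fbe, moreauEnv_eq_of_mem_proxSet hw, hb, one_div_two_mul_norm_sub_sub_smul_sq hγ]
  norm_cast
  ring

theorem fbe_le_of_eq_coe {w : E} (hb : g w = b) (v : E) :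
    fbe l l' g γ v ≤
      ((l v - γ / 2 * ‖l' v‖ ^ 2 + b + 1 / (2 * γ) * ‖w - (v - γ • l' v)‖ ^ 2 : ℝ) : EReal) := by
  rw [fbe, add_assoc, EReal.coe_add _ (b + _), EReal.coe_add, ← hb]
  gcongr
  exact iInf_le _ w

theorem coe_add_le_fbe_of_mem_proxSet [CompleteSpace E] {L : ℝ} (hγ : γ ≠ 0)
    (hgrad : ∀ x, HasGradientAt l (l' x) x) (hlip : ∀ x y, ‖l' x - l' y‖ ≤ L * ‖x - y‖)
    {u w : E} (hw : w ∈ proxSet g γ (u - γ • l' u)) (hb : g w = b) :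
    ((l w + b + (1 / (2 * γ) - L / 2) * ‖w - u‖ ^ 2 : ℝ) : EReal) ≤ fbe l l' g γ u := by
  rw [fbe_eq_of_mem_proxSet hγ hw hb, EReal.coe_le_coe_iff]
  linarith [le_add_inner_add_of_lipschitz_gradient hgrad hlip u w]

theorem eventually_fbe_lt (hγ : γ ≠ 0) {w : E} (hl : ContinuousAt l w) (hl' : ContinuousAt l' w)
    (hb : g w = b) {K : ℝ} (hK : l w + b < K) : ∀ᶠ v in 𝓝 w, fbe l l' g γ v < K := by
  set F : E → ℝ := fun v =>
    l v - γ / 2 * ‖l' v‖ ^ 2 + b + 1 / (2 * γ) * ‖w - (v - γ • l' v)‖ ^ 2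
  have hFw : F w = l w + b := by
    simp only [F, one_div_two_mul_norm_sub_sub_smul_sq hγ, sub_self, inner_zero_right, norm_zero]
    ring
  have hF : ContinuousAt F w := by fun_prop
  filter_upwards [hF.eventually (gt_mem_nhds (hFw ▸ hK))] with v hv
  exact (fbe_le_of_eq_coe hb v).trans_lt (EReal.coe_lt_coe_iff.2 hv)

end

theorem panoc_linesearch_terminates_general
    {E : Type*} [NormedAddCommGroup E] [InnerProductSpace ℝ E] [FiniteDimensional ℝ E]
    (l : E → ℝ) (l' : E → E) (g : E → EReal) (L γ : ℝ)
    (hγ : 0 < γ)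
    (hgrad : ∀ x : E, HasGradientAt l (l' x) x)
    (hlip : ∀ x y : E, ‖l' x - l' y‖ ≤ L * ‖x - y‖)
    (hproper : ∃ x : E, g x ≠ ⊤) (hbot : ∀ x : E, g x ≠ ⊥)
    (σ : ℝ) (hσ' : σ < γ * (1 - γ * L) / 2)
    (u ub d : E) (hub : ub ∈ proxSet g γ (u - γ • l' u))
    (r : E) (hr : r = (1 / γ) • (u - ub)) (hr0 : r ≠ 0) :
    ∃ i : ℕ,
      fbe l l' g γ (u - ((1 - (1 / 2 : ℝ) ^ i) * γ) • r + ((1 / 2 : ℝ) ^ i) • d) ≤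
        fbe l l' g γ u - ((σ * ‖r‖ ^ 2 : ℝ) : EReal) := by
  obtain ⟨b, hb⟩ : ∃ b : ℝ, g ub = b :=
    ⟨(g ub).toReal, (EReal.coe_toReal (ne_top_of_mem_proxSet hproper hub) (hbot ub)).symm⟩
  have hγr : γ • r = u - ub := by rw [hr, smul_smul, mul_one_div_cancel hγ.ne', one_smul]
  have hnorm : ‖ub - u‖ = γ * ‖r‖ := by
    rw [← norm_neg, neg_sub, ← hγr, norm_smul, Real.norm_of_nonneg hγ.le]
  have hdecrease : l ub + b <
      l ub + b + (1 / (2 * γ) - L / 2) * ‖ub - u‖ ^ 2 - σ * ‖r‖ ^ 2 := by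
    have hrpos : 0 < ‖r‖ ^ 2 := by positivity
    have : (1 / (2 * γ) - L / 2) * ‖ub - u‖ ^ 2 = γ * (1 - γ * L) / 2 * ‖r‖ ^ 2 := by
      rw [hnorm]; field_simp
    linarith [mul_lt_mul_of_pos_right hσ' hrpos]
  have hl : Continuous l := continuous_iff_continuousAt.2 fun x => (hgrad x).continuousAt
  have hl' : Continuous l' :=
    (LipschitzWith.of_dist_le' (by simpa only [dist_eq_norm] using hlip)).continuous
  have hsteps : Tendsto
      (fun i : ℕ => u - ((1 - (1 / 2 : ℝ) ^ i) * γ) • r + ((1 / 2 : ℝ) ^ i) • d) atTop (𝓝 ub) := by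
    have hτ : Tendsto (fun i : ℕ => (1 / 2 : ℝ) ^ i) atTop (𝓝 0) :=
      tendsto_pow_atTop_nhds_zero_of_lt_one (by norm_num) (by norm_num)
    have hcont : Continuous fun τ : ℝ => u - ((1 - τ) * γ) • r + τ • d := by fun_prop
    simpa [Function.comp_def, hγr] using (hcont.tendsto 0).comp hτ
  obtain ⟨i, hi⟩ := (hsteps.eventually
    (eventually_fbe_lt hγ.ne' hl.continuousAt hl'.continuousAt hb hdecrease)).exists
  refine ⟨i, hi.le.trans ?_⟩
  rw [EReal.coe_sub]
  exact EReal.sub_le_sub (coe_add_le_fbe_of_mem_proxSet hγ.ne' hgrad hlip hub hb) le_rfl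

/-- well-definedness of the PANOC linesearch: the backtracking
terminates after finitely many halvings. -/
theorem panoc_linesearch_terminates
    {E : Type*} [NormedAddCommGroup E] [InnerProductSpace ℝ E] [FiniteDimensional ℝ E]
    (l : E → ℝ) (l' : E → E) (g : E → EReal) (L γ : ℝ)
    (hL : 0 < L) (hγ : 0 < γ)
    (hgrad : ∀ x : E, HasGradientAt l (l' x) x)
    (hlip : ∀ x y : E, ‖l' x - l' y‖ ≤ L * ‖x - y‖)
    (hproper : ∃ x : E, g x ≠ ⊤) (hbot : ∀ x : E, g x ≠ ⊥)
    (hlsc : LowerSemicontinuous g)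
    (hbdd : ∃ m : ℝ, ∀ x : E, (m : EReal) ≤ g x)
    (hγL : γ < 1 / L) (σ : ℝ) (hσ : 0 < σ) (hσ' : σ < γ * (1 - γ * L) / 2)
    (u ub d : E) (hub : ub ∈ proxSet g γ (u - γ • l' u))
    (r : E) (hr : r = (1 / γ) • (u - ub)) (hr0 : r ≠ 0) :
    ∃ i : ℕ,
      fbe l l' g γ (u - ((1 - (1 / 2 : ℝ) ^ i) * γ) • r + ((1 / 2 : ℝ) ^ i) • d) ≤
        fbe l l' g γ u - ((σ * ‖r‖ ^ 2 : ℝ) : EReal) :=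
  panoc_linesearch_terminates_general l l' g L γ hγ hgrad hlip hproper hbot σ hσ' u ub d hub r hr
    hr0
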